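/- For every θ ∈ (0,1) there exists a constant C > 0, depending only on θ, such that for every real B ≥ 2 and every finitely supported function l : ℤ → ℤ with ∑_{n∈ℤ} |l_n|·w(n)^{θ/2} ≤ B, one has ∏_{n∈ℤ} (1 + l_n²·w(n)⁴) ≤ exp( C·B^{3/(3+θ)} ). -/

import Mathlib

open scoped BigOperators

/-- `w(n) = max(1, |n|)` as a real number. -/
noncomputable def wR (n : ℤ) : ℝ := max 1 |(n : ℝ)|

/-!
Put `a n = |l n| * w(n)^(θ/2)` and `ε = 1/(3+θ)`. Each factor satisfies
`log (1 + l n ^ 2 * w(n)^4) = O(log a n) = O(a n ^ ε)`, so it suffices to bound `∑ a n ^ ε`.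
Split at a threshold `M`: the terms with `a n ≥ M` contribute at most `M^(ε-1) * ∑ a n ≤ M^(ε-1) B`,
and since `w(n)^(θ/2) ≤ a n` there are only `O(M^(2/θ))` terms with `a n < M`, contributing
`O(M^(2/θ+ε))`. The choice `M = B^(θ/(2+θ))` balances both to `O(B^(3/(3+θ)))`.
-/

open Finset Real

lemma one_le_wR (n : ℤ) : 1 ≤ wR n := le_max_left _ _

lemma wR_pos (n : ℤ) : 0 < wR n := zero_lt_one.trans_le (one_le_wR n)

lemma one_le_abs_intCast {n : ℤ} (hn : n ≠ 0) : (1 : ℝ) ≤ |(n : ℝ)| := by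
  exact_mod_cast Int.one_le_abs hn

lemma card_filter_wR_le (s : Finset ℤ) {X : ℝ} (hX : 1 ≤ X) :
    ((s.filter fun n => wR n ≤ X).card : ℝ) ≤ 3 * X := by
  have hsub : s.filter (fun n => wR n ≤ X) ⊆ Icc (-⌊X⌋) ⌊X⌋ := by
    intro n hn
    have habs : |(n : ℝ)| ≤ X := (le_max_right _ _).trans (mem_filter.1 hn).2
    rw [mem_Icc, ← abs_le, Int.le_floor, Int.cast_abs]
    exact habs
  have hcard : ((Icc (-⌊X⌋) ⌊X⌋).card : ℝ) = 2 * ⌊X⌋ + 1 := by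
    have hnonneg : 0 ≤ ⌊X⌋ + 1 - -⌊X⌋ := by linarith [Int.floor_pos.2 hX]
    rw [Int.card_Icc, ← Int.cast_natCast, Int.toNat_of_nonneg hnonneg]
    push_cast
    ring
  calc ((s.filter fun n => wR n ≤ X).card : ℝ) ≤ (Icc (-⌊X⌋) ⌊X⌋).card := by
        exact_mod_cast card_le_card hsub
    _ = 2 * ⌊X⌋ + 1 := hcard
    _ ≤ 3 * X := by linarith [Int.floor_le X]

section

variable {θ : ℝ} {s : Finset ℤ} {a : ℤ → ℝ}

lemma sum_rpow_le_of_threshold (hθ : 0 < θ) (ha : ∀ n ∈ s, wR n ^ (θ / 2) ≤ a n)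
    {ε : ℝ} (hε0 : 0 < ε) (hε1 : ε ≤ 1) {M : ℝ} (hM : 1 ≤ M) :
    ∑ n ∈ s, a n ^ ε ≤ 3 * M ^ (2 / θ + ε) + M ^ (ε - 1) * ∑ n ∈ s, a n := by
  have hM0 : 0 < M := zero_lt_one.trans_le hM
  have ha0 : ∀ n ∈ s, 0 ≤ a n := fun n hn =>
    (rpow_pos_of_pos (wR_pos n) _).le.trans (ha n hn)
  rw [← sum_filter_add_sum_filter_not s (fun n => a n < M)]
  gcongr ?_ + ?_
  · have hsub : s.filter (fun n => a n < M) ⊆ s.filter (fun n => wR n ≤ M ^ (2 / θ)) := by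
      intro n hn
      obtain ⟨hns, hlt⟩ := mem_filter.1 hn
      refine mem_filter.2 ⟨hns, ?_⟩
      calc wR n = (wR n ^ (θ / 2)) ^ (2 / θ) := by
            rw [← rpow_mul (wR_pos n).le, show θ / 2 * (2 / θ) = 1 by field_simp, rpow_one]
        _ ≤ M ^ (2 / θ) :=
            rpow_le_rpow (rpow_pos_of_pos (wR_pos n) _).le ((ha n hns).trans hlt.le) (by positivity)
    calc ∑ n ∈ s with a n < M, a n ^ ε ≤ ∑ n ∈ s with a n < M, M ^ ε :=
          sum_le_sum fun n hn => rpow_le_rpow (ha0 n (mem_filter.1 hn).1)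
            (mem_filter.1 hn).2.le hε0.le
      _ ≤ 3 * M ^ (2 / θ) * M ^ ε := by
          rw [sum_const, nsmul_eq_mul]
          gcongr
          exact (Nat.cast_le.2 (card_le_card hsub)).trans
            (card_filter_wR_le s (one_le_rpow hM (by positivity)))
      _ = 3 * M ^ (2 / θ + ε) := by rw [rpow_add hM0, mul_assoc]
  · rw [mul_sum]
    calc ∑ n ∈ s with ¬a n < M, a n ^ ε ≤ ∑ n ∈ s with ¬a n < M, M ^ (ε - 1) * a n := by
          refine sum_le_sum fun n hn => ?_
          obtain ⟨-, hge⟩ := mem_filter.1 hn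
          have han : 0 < a n := hM0.trans_le (not_lt.1 hge)
          calc a n ^ ε = a n ^ (ε - 1) * a n := by
                rw [← rpow_add_one han.ne', sub_add_cancel]
            _ ≤ M ^ (ε - 1) * a n := mul_le_mul_of_nonneg_right
                (rpow_le_rpow_of_nonpos hM0 (not_lt.1 hge) (by linarith)) han.le
      _ ≤ ∑ n ∈ s, M ^ (ε - 1) * a n :=
          sum_le_sum_of_subset_of_nonneg (filter_subset _ _) fun n hn _ =>
            mul_nonneg (by positivity) (ha0 n hn)

lemma sum_rpow_one_div_three_add_le (hθ : 0 < θ) (ha : ∀ n ∈ s, wR n ^ (θ / 2) ≤ a n)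
    {B : ℝ} (hB : 1 ≤ B) (hsum : ∑ n ∈ s, a n ≤ B) :
    ∑ n ∈ s, a n ^ (1 / (3 + θ)) ≤ 4 * B ^ (3 / (3 + θ)) := by
  have hB0 : 0 < B := zero_lt_one.trans_le hB
  have hε1 : 1 / (3 + θ) ≤ 1 := by rw [div_le_one (by positivity)]; linarith
  have hM : 1 ≤ B ^ (θ / (2 + θ)) := one_le_rpow hB (by positivity)
  have hsmall : (B ^ (θ / (2 + θ))) ^ (2 / θ + 1 / (3 + θ)) = B ^ (3 / (3 + θ)) := by
    rw [← rpow_mul hB0.le]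
    congr 1
    field_simp
    ring
  have hlarge : (B ^ (θ / (2 + θ))) ^ (1 / (3 + θ) - 1) * B = B ^ (3 / (3 + θ)) := by
    rw [← rpow_mul hB0.le, ← rpow_add_one hB0.ne']
    congr 1
    field_simp
    ring
  calc ∑ n ∈ s, a n ^ (1 / (3 + θ))
      ≤ 3 * (B ^ (θ / (2 + θ))) ^ (2 / θ + 1 / (3 + θ))
        + (B ^ (θ / (2 + θ))) ^ (1 / (3 + θ) - 1) * ∑ n ∈ s, a n :=
        sum_rpow_le_of_threshold hθ ha (by positivity) hε1 hM
    _ ≤ 3 * (B ^ (θ / (2 + θ))) ^ (2 / θ + 1 / (3 + θ))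
        + (B ^ (θ / (2 + θ))) ^ (1 / (3 + θ) - 1) * B := by gcongr
    _ = 4 * B ^ (3 / (3 + θ)) := by rw [hsmall, hlarge]; ring

end

lemma one_add_sq_mul_pow_four_le {θ L w : ℝ} (hθ : 0 < θ) (hL : 1 ≤ L) (hw : 1 ≤ w) :
    1 + L ^ 2 * w ^ 4 ≤ 2 * (L * w ^ (θ / 2)) ^ (2 + 8 / θ) := by
  have hL0 : 0 ≤ L := zero_le_one.trans hL
  have hw0 : 0 ≤ w := zero_le_one.trans hw
  have hpow : (L * w ^ (θ / 2)) ^ (2 + 8 / θ) = L ^ (2 + 8 / θ) * w ^ (θ + 4) := by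
    rw [mul_rpow hL0 (by positivity), ← rpow_mul hw0]
    congr 2
    field_simp
    ring
  have hprod : L ^ 2 * w ^ 4 ≤ L ^ (2 + 8 / θ) * w ^ (θ + 4) := by
    rw [← rpow_natCast L 2, ← rpow_natCast w 4]
    push_cast
    exact mul_le_mul (rpow_le_rpow_of_exponent_le hL (by linarith [(by positivity : 0 ≤ 8 / θ)]))
      (rpow_le_rpow_of_exponent_le hw (by linarith)) (by positivity) (by positivity)
  have hone : 1 ≤ L ^ 2 * w ^ 4 := one_le_mul_of_one_le_of_one_le (one_le_pow₀ hL) (one_le_pow₀ hw)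
  linarith

lemma two_mul_rpow_le_exp {a p ε : ℝ} (ha : 1 ≤ a) (hp : 0 ≤ p) (hε : 0 < ε) :
    2 * a ^ p ≤ exp ((log 2 + p / ε) * a ^ ε) := by
  have ha0 : 0 < a := zero_lt_one.trans_le ha
  have hlog : log a ≤ a ^ ε / ε := log_le_rpow_div ha0.le hε
  have haε : 1 ≤ a ^ ε := one_le_rpow ha hε.le
  rw [← exp_log (by positivity : 0 < 2 * a ^ p), exp_le_exp, log_mul two_ne_zero (by positivity),
    log_rpow ha0]
  calc log 2 + p * log a ≤ log 2 * a ^ ε + p * (a ^ ε / ε) := by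
        gcongr
        exact le_mul_of_one_le_right (log_nonneg one_le_two) haε
    _ = (log 2 + p / ε) * a ^ ε := by ring

theorem stmt8 (θ : ℝ) (hθ : θ ∈ Set.Ioo (0:ℝ) 1) :
    ∃ C > (0:ℝ), ∀ B : ℝ, 2 ≤ B → ∀ l : ℤ →₀ ℤ,
      (∑ n ∈ l.support, |(l n : ℝ)| * wR n ^ (θ / 2)) ≤ B →
      ∏ n ∈ l.support, (1 + (l n : ℝ) ^ 2 * wR n ^ 4)
        ≤ Real.exp (C * B ^ (3 / (3 + θ))) := by
  have hθ0 : 0 < θ := hθ.1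
  set ε : ℝ := 1 / (3 + θ)
  set K : ℝ := log 2 + (2 + 8 / θ) / ε
  refine ⟨4 * K, by positivity, fun B hB l hsum => ?_⟩
  have hl : ∀ n ∈ l.support, (1 : ℝ) ≤ |(l n : ℝ)| := fun n hn =>
    one_le_abs_intCast (Finsupp.mem_support_iff.1 hn)
  have hfactor : ∀ n ∈ l.support,
      1 + (l n : ℝ) ^ 2 * wR n ^ 4 ≤ exp (K * (|(l n : ℝ)| * wR n ^ (θ / 2)) ^ ε) := by
    intro n hn
    rw [← sq_abs]
    exact (one_add_sq_mul_pow_four_le hθ0 (hl n hn) (one_le_wR n)).trans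
      (two_mul_rpow_le_exp (one_le_mul_of_one_le_of_one_le (hl n hn)
        (one_le_rpow (one_le_wR n) (by positivity))) (by positivity) (by positivity))
  have hsum_rpow := sum_rpow_one_div_three_add_le hθ0
    (fun n hn => le_mul_of_one_le_left (rpow_pos_of_pos (wR_pos n) _).le (hl n hn)) (by linarith) hsum
  calc ∏ n ∈ l.support, (1 + (l n : ℝ) ^ 2 * wR n ^ 4)
      ≤ ∏ n ∈ l.support, exp (K * (|(l n : ℝ)| * wR n ^ (θ / 2)) ^ ε) :=
        prod_le_prod (fun n _ => by have := wR_pos n; positivity) hfactor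
    _ = exp (K * ∑ n ∈ l.support, (|(l n : ℝ)| * wR n ^ (θ / 2)) ^ ε) := by
        rw [← exp_sum, mul_sum]
    _ ≤ exp (4 * K * B ^ (3 / (3 + θ))) := by
        rw [mul_comm 4 K, mul_assoc]
        gcongr
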